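/- Let α ∈ (0,1), β ∈ ℝ, λ > 0, and set c_α = (1−α/2)(1−α). Define Λ(z) = (Γ(α)λ/c_α)·(z²−β²) + ∫₀^∞ 2t^α/(t²−z²) dt for z ∈ ℂ∖ℝ. Then: (i) Λ(z) = (Γ(α)λ/c_α)·(z²−β²) + z^{α−1}·(π/cos(πα/2))·e^{(1−α)πi/2} for Im z > 0 and Λ(z) = (Γ(α)λ/c_α)·(z²−β²) + z^{α−1}·(π/cos(πα/2))·e^{−(1−α)πi/2} for Im z < 0 (principal branch powers); (ii) the equation λ = (c_α/Γ(α))·(π/cos(πα/2))·ν^{α−1}/(β²+ν²) has a unique solution ν > 0; and (iii) the set of zeros of Λ in ℂ∖ℝ is exactly {iν, −iν} for this ν. -/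

import Mathlib

open Real Complex Set

/-- `Λ(z) = (Γ(α)λ/c_α)(z²−β²) + ∫₀^∞ 2t^α/(t²−z²) dt` with `c_α = (1−α/2)(1−α)`. -/
noncomputable def LambdaFn (α β lam : ℝ) (z : ℂ) : ℂ :=
  ((Real.Gamma α * lam / ((1 - α / 2) * (1 - α)) : ℝ) : ℂ) * (z ^ 2 - (β : ℂ) ^ 2) +
    ∫ t in Set.Ioi (0:ℝ), 2 * ((t : ℂ) ^ (α : ℂ)) / ((t : ℂ) ^ 2 - z ^ 2)

open MeasureTheory Filter Topology ComplexConjugate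

/-!
The integral term `Φ(z) = ∫₀^∞ 2t^α/(t²−z²) dt` of `Λ` is holomorphic off the real axis
(differentiation under the integral sign). On the imaginary axis it is the real integral
`∫₀^∞ 2t^α/(t²+y²) dt = |y|^(α−1) π / cos(πα/2)`, which the substitution `s = t²` reduces to the
Mellin integral `∫₀^∞ s^(μ−1)/(1+s) ds = Γ(μ)Γ(1−μ) = π / sin(πμ)`. The closed form takes the same
values on the positive imaginary axis, so the identity theorem gives (i) in the upper half-plane,
and `Φ(z̄) = conj Φ(z)` transfers it to the lower one.

In the upper half-plane `Im z²` and the imaginary part of the closed form both have the sign of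
`Re z`, so every zero of `Λ` lies on the imaginary axis, where `Λ(iy) = 0` is exactly the
characteristic equation at `ν = |y|`. Rewritten as `ν^(1−α)(β²+ν²) = const`, its left side
increases from `0` to `∞`, which gives (ii) and then (iii).
-/

section RealIntegrals

lemma integrableOn_rpow_div_one_add {μ : ℝ} (h0 : 0 < μ) (h1 : μ < 1) :
    IntegrableOn (fun s : ℝ => s ^ (μ - 1) / (1 + s)) (Ioi 0) := by
  have hmeas : AEStronglyMeasurable (fun s : ℝ => s ^ (μ - 1) / (1 + s)) :=
    (by fun_prop : Measurable fun s : ℝ => s ^ (μ - 1) / (1 + s)).aestronglyMeasurable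
  rw [← Ioc_union_Ioi_eq_Ioi zero_le_one]
  refine IntegrableOn.union ?_ ?_
  · have hpow : IntegrableOn (fun s : ℝ => s ^ (μ - 1)) (Ioc 0 1) := by
      rw [← intervalIntegrable_iff_integrableOn_Ioc_of_le zero_le_one]
      exact intervalIntegral.intervalIntegrable_rpow' (by linarith)
    refine hpow.mono' hmeas.restrict ?_
    filter_upwards [ae_restrict_mem measurableSet_Ioc] with s hs
    have hs0 : 0 < s := hs.1
    rw [Real.norm_of_nonneg (by positivity)]
    exact div_le_self (by positivity) (by linarith)
  · refine (integrableOn_Ioi_rpow_of_lt (by linarith : μ - 2 < -1) one_pos).mono'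
      hmeas.restrict ?_
    filter_upwards [ae_restrict_mem measurableSet_Ioi] with s hs
    have hs0 : 0 < s := one_pos.trans hs
    rw [Real.norm_of_nonneg (by positivity), show μ - 2 = μ - 1 - 1 by ring,
      Real.rpow_sub_one hs0.ne' (μ - 1)]
    exact div_le_div_of_nonneg_left (by positivity) hs0 (by linarith)

lemma integral_exp_neg_mul_Ioi {b : ℝ} (hb : 0 < b) :
    ∫ u in Ioi (0 : ℝ), Real.exp (-(b * u)) = b⁻¹ := by
  have h := integral_comp_mul_left_Ioi (fun u => Real.exp (-u)) 0 hb
  simp only [mul_zero] at h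
  rw [h, integral_exp_neg_Ioi_zero, smul_eq_mul, mul_one]

lemma integral_rpow_mul_exp_neg_one_add_mul {μ u : ℝ} (hμ : 0 < μ) (hu : 0 < u) :
    ∫ s in Ioi (0 : ℝ), s ^ (μ - 1) * Real.exp (-((1 + s) * u))
      = Real.Gamma μ * (Real.exp (-u) * u ^ ((1 - μ) - 1)) := by
  have hGamma := integral_rpow_mul_exp_neg_mul_rpow one_pos (by linarith : -1 < μ - 1) hu
  simp only [Real.rpow_one, sub_add_cancel, div_one] at hGamma
  have hsplit : ∀ s, s ^ (μ - 1) * Real.exp (-((1 + s) * u))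
      = Real.exp (-u) * (s ^ (μ - 1) * Real.exp (-u * s)) := fun s => by
    rw [show -((1 + s) * u) = -u + -u * s by ring, Real.exp_add]
    ring
  simp only [hsplit, integral_const_mul, hGamma, show (1 - μ) - 1 = -μ by ring]
  ring

/-- Writing `1 / (1 + s) = ∫₀^∞ e^{-(1+s)u} du` and swapping the integrals turns the left side
into `Γ(μ) Γ(1 - μ)`. -/
theorem integral_rpow_div_one_add {μ : ℝ} (h0 : 0 < μ) (h1 : μ < 1) :
    ∫ s in Ioi (0 : ℝ), s ^ (μ - 1) / (1 + s) = π / Real.sin (π * μ) := by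
  set F : ℝ → ℝ → ℝ := fun s u => s ^ (μ - 1) * Real.exp (-((1 + s) * u))
  have inner_u : ∀ s ∈ Ioi (0 : ℝ), ∫ u in Ioi (0 : ℝ), F s u = s ^ (μ - 1) / (1 + s) := by
    intro s (hs : 0 < s)
    rw [integral_const_mul, integral_exp_neg_mul_Ioi (by linarith), div_eq_mul_inv]
  have hF_int : Integrable (Function.uncurry F)
      ((volume.restrict (Ioi 0)).prod (volume.restrict (Ioi 0))) := by
    rw [integrable_prod_iff (by unfold Function.uncurry F; fun_prop)]
    refine ⟨?_, ?_⟩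
    · filter_upwards [ae_restrict_mem measurableSet_Ioi] with s hs
      have hs0 : 0 < s := hs
      have := exp_neg_integrableOn_Ioi 0 (by linarith : 0 < 1 + s)
      exact (this.congr_fun (fun u _ => by rw [neg_mul]) measurableSet_Ioi).const_mul
        (s ^ (μ - 1))
    · refine (integrableOn_rpow_div_one_add h0 h1).congr_fun (fun s hs => ?_) measurableSet_Ioi
      have hs0 : 0 < s := hs
      show s ^ (μ - 1) / (1 + s) = ∫ u in Ioi 0, ‖F s u‖
      rw [← inner_u s hs]
      refine setIntegral_congr_fun measurableSet_Ioi (fun u _ => ?_)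
      exact (Real.norm_of_nonneg (by positivity)).symm
  calc ∫ s in Ioi (0 : ℝ), s ^ (μ - 1) / (1 + s)
      = ∫ s in Ioi (0 : ℝ), ∫ u in Ioi (0 : ℝ), F s u :=
        (setIntegral_congr_fun measurableSet_Ioi inner_u).symm
    _ = ∫ u in Ioi (0 : ℝ), ∫ s in Ioi (0 : ℝ), F s u := integral_integral_swap hF_int
    _ = Real.Gamma μ * Real.Gamma (1 - μ) := by
        rw [setIntegral_congr_fun measurableSet_Ioi
            fun u hu => integral_rpow_mul_exp_neg_one_add_mul h0 hu, integral_const_mul,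
          ← Real.Gamma_eq_integral (by linarith)]
    _ = π / Real.sin (π * μ) := Real.Gamma_mul_Gamma_one_sub μ

lemma rpow_two_sub_one_mul_comp_sq {x : ℝ} (hx : 0 < x) (α : ℝ) :
    x ^ ((2 : ℝ) - 1) * ((x ^ (2 : ℝ)) ^ ((α + 1) / 2 - 1) / (1 + x ^ (2 : ℝ)))
      = x ^ α / (x ^ 2 + 1) := by
  rw [← Real.rpow_mul hx.le, Real.rpow_two, mul_div_assoc', ← Real.rpow_add hx, add_comm 1]
  ring_nf

lemma integrableOn_rpow_div_sq_add_one {α : ℝ} (h0 : -1 < α) (h1 : α < 1) :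
    IntegrableOn (fun t : ℝ => t ^ α / (t ^ 2 + 1)) (Ioi 0) := by
  have := (integrableOn_Ioi_comp_rpow_iff' _ two_ne_zero).mpr
    (integrableOn_rpow_div_one_add (μ := (α + 1) / 2) (by linarith) (by linarith))
  refine this.congr_fun (fun x hx => ?_) measurableSet_Ioi
  exact rpow_two_sub_one_mul_comp_sq hx α

theorem integral_rpow_div_sq_add_one {α : ℝ} (h0 : -1 < α) (h1 : α < 1) :
    ∫ t in Ioi (0 : ℝ), 2 * t ^ α / (t ^ 2 + 1) = π / Real.cos (π * α / 2) := by
  have hsub := integral_comp_rpow_Ioi_of_pos (g := fun s : ℝ => s ^ ((α + 1) / 2 - 1) / (1 + s))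
    two_pos
  rw [integral_rpow_div_one_add (by linarith) (by linarith),
    show π * ((α + 1) / 2) = π * α / 2 + π / 2 by ring, Real.sin_add_pi_div_two] at hsub
  rw [← hsub]
  refine setIntegral_congr_fun measurableSet_Ioi (fun x hx => ?_)
  rw [smul_eq_mul, mul_assoc, rpow_two_sub_one_mul_comp_sq hx α, mul_div_assoc]

theorem integral_rpow_div_sq_add_sq {α : ℝ} (h0 : -1 < α) (h1 : α < 1) {y : ℝ} (hy : 0 < y) :
    ∫ t in Ioi (0 : ℝ), 2 * t ^ α / (t ^ 2 + y ^ 2) = y ^ (α - 1) * (π / Real.cos (π * α / 2)) := by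
  have hscale := integral_comp_mul_left_Ioi (fun t => 2 * t ^ α / (t ^ 2 + y ^ 2)) 0 hy
  rw [mul_zero, smul_eq_mul] at hscale
  have hpt : ∀ x ∈ Ioi (0 : ℝ), 2 * (y * x) ^ α / ((y * x) ^ 2 + y ^ 2)
      = y ^ (α - 2) * (2 * x ^ α / (x ^ 2 + 1)) := by
    intro x (hx : 0 < x)
    rw [Real.mul_rpow hy.le hx.le, Real.rpow_sub hy, Real.rpow_two]
    field_simp
  rw [setIntegral_congr_fun measurableSet_Ioi hpt, integral_const_mul,
    integral_rpow_div_sq_add_one h0 h1, eq_inv_mul_iff_mul_eq₀ hy.ne'] at hscale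
  rw [← hscale, ← mul_assoc, show α - 1 = 1 + (α - 2) by ring, Real.rpow_add hy, Real.rpow_one]

end RealIntegrals

lemma cos_pi_mul_div_two_pos {α : ℝ} (h0 : -1 < α) (h1 : α < 1) : 0 < Real.cos (π * α / 2) :=
  Real.cos_pos_of_mem_Ioo ⟨by nlinarith [Real.pi_pos], by nlinarith [Real.pi_pos]⟩

noncomputable def lambdaIntegral (α : ℝ) (z : ℂ) : ℂ :=
  ∫ t in Ioi (0 : ℝ), 2 * ((t : ℂ) ^ (α : ℂ)) / ((t : ℂ) ^ 2 - z ^ 2)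

lemma LambdaFn_eq (α β lam : ℝ) (z : ℂ) :
    LambdaFn α β lam z =
      ((Real.Gamma α * lam / ((1 - α / 2) * (1 - α)) : ℝ) : ℂ) * (z ^ 2 - (β : ℂ) ^ 2) +
        lambdaIntegral α z := rfl

section Holomorphy

lemma inv_norm_sq_sub_sq_le {z : ℂ} {δ M : ℝ} (hδ : 0 < δ) (him : δ ≤ |z.im|) (hM : ‖z‖ ≤ M)
    (t : ℝ) :
    ‖(t : ℂ) ^ 2 - z ^ 2‖⁻¹ ≤ (1 + (1 + M ^ 2) / δ ^ 2) / (t ^ 2 + 1) := by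
  set N := ‖(t : ℂ) ^ 2 - z ^ 2‖
  have h_im : δ ^ 2 ≤ N := by
    have hsub : |z.im| ≤ ‖(t : ℂ) - z‖ := by simpa using abs_im_le_norm ((t : ℂ) - z)
    have hadd : |z.im| ≤ ‖(t : ℂ) + z‖ := by simpa using abs_im_le_norm ((t : ℂ) + z)
    calc δ ^ 2 ≤ |z.im| * |z.im| := by nlinarith
      _ ≤ ‖(t : ℂ) - z‖ * ‖(t : ℂ) + z‖ := mul_le_mul hsub hadd (abs_nonneg _) (norm_nonneg _)
      _ = N := by rw [← norm_mul]; congr 1; ring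
  have h_re : t ^ 2 - M ^ 2 ≤ N := by
    have := norm_sub_norm_le ((t : ℂ) ^ 2) (z ^ 2)
    rw [norm_pow, norm_pow, Complex.norm_real, Real.norm_eq_abs, sq_abs] at this
    nlinarith [norm_nonneg z]
  have hN : 0 < N := lt_of_lt_of_le (by positivity) h_im
  have hq : 1 ≤ N / δ ^ 2 := (one_le_div (by positivity)).mpr h_im
  have hMq : M ^ 2 ≤ M ^ 2 * (N / δ ^ 2) := le_mul_of_one_le_right (sq_nonneg M) hq
  rw [le_div_iff₀ (by positivity), inv_mul_le_iff₀ hN]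
  calc t ^ 2 + 1 ≤ N + M ^ 2 * (N / δ ^ 2) + N / δ ^ 2 := by linarith
    _ = N * (1 + (1 + M ^ 2) / δ ^ 2) := by ring

lemma sq_sub_sq_ne_zero_of_im_ne_zero (t : ℝ) {z : ℂ} (hz : z.im ≠ 0) :
    (t : ℂ) ^ 2 - z ^ 2 ≠ 0 := by
  rw [sq_sub_sq]
  refine mul_ne_zero (fun h => hz ?_) (fun h => hz ?_) <;>
    simpa using congrArg Complex.im h

lemma norm_lambdaIntegrand_le {α K t : ℝ} (ht : 0 < t) {z : ℂ}
    (hK : ‖(t : ℂ) ^ 2 - z ^ 2‖⁻¹ ≤ K / (t ^ 2 + 1)) :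
    ‖2 * ((t : ℂ) ^ (α : ℂ)) / ((t : ℂ) ^ 2 - z ^ 2)‖ ≤ 2 * K * (t ^ α / (t ^ 2 + 1)) := by
  rw [norm_div, norm_mul, Complex.norm_two, norm_cpow_eq_rpow_re_of_pos ht, Complex.ofReal_re,
    div_eq_mul_inv]
  calc 2 * t ^ α * ‖(t : ℂ) ^ 2 - z ^ 2‖⁻¹ ≤ 2 * t ^ α * (K / (t ^ 2 + 1)) := by gcongr
    _ = 2 * K * (t ^ α / (t ^ 2 + 1)) := by ring

lemma norm_deriv_lambdaIntegrand_le {α K M t : ℝ} (ht : 0 < t) {z : ℂ}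
    (hK : ‖(t : ℂ) ^ 2 - z ^ 2‖⁻¹ ≤ K / (t ^ 2 + 1)) (hM : ‖z‖ ≤ M) :
    ‖2 * ((t : ℂ) ^ (α : ℂ)) * (2 * z) / ((t : ℂ) ^ 2 - z ^ 2) ^ 2‖
      ≤ 4 * M * K ^ 2 * (t ^ α / (t ^ 2 + 1)) := by
  have hMt : 0 ≤ 4 * M * t ^ α := by
    have hM0 : 0 ≤ M := (norm_nonneg z).trans hM
    positivity
  have hsq : (K / (t ^ 2 + 1)) ^ 2 ≤ K ^ 2 / (t ^ 2 + 1) := by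
    rw [div_pow]
    exact div_le_div_of_nonneg_left (sq_nonneg K) (by positivity) (by nlinarith)
  calc ‖2 * ((t : ℂ) ^ (α : ℂ)) * (2 * z) / ((t : ℂ) ^ 2 - z ^ 2) ^ 2‖
      = 4 * ‖z‖ * t ^ α * ‖(t : ℂ) ^ 2 - z ^ 2‖⁻¹ ^ 2 := by
        rw [norm_div, norm_mul, norm_mul, norm_mul, norm_pow, Complex.norm_two,
          norm_cpow_eq_rpow_re_of_pos ht, Complex.ofReal_re, inv_pow]
        ring
    _ ≤ 4 * M * t ^ α * (K / (t ^ 2 + 1)) ^ 2 := by gcongr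
    _ ≤ 4 * M * t ^ α * (K ^ 2 / (t ^ 2 + 1)) := mul_le_mul_of_nonneg_left hsq hMt
    _ = 4 * M * K ^ 2 * (t ^ α / (t ^ 2 + 1)) := by ring

/-- On a ball around `z₀` that avoids the real axis, the integrand and its `z`-derivative are
dominated by a multiple of `t ^ α / (t ^ 2 + 1)`. -/
theorem differentiableAt_lambdaIntegral {α : ℝ} (h0 : -1 < α) (h1 : α < 1) {z₀ : ℂ}
    (hz₀ : z₀.im ≠ 0) : DifferentiableAt ℂ (lambdaIntegral α) z₀ := by
  set δ := |z₀.im| / 2 with hδ_def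
  set M := ‖z₀‖ + δ
  set K := 1 + (1 + M ^ 2) / δ ^ 2
  have hδ : 0 < δ := by positivity
  have hball : ∀ z ∈ Metric.ball z₀ δ, δ ≤ |z.im| ∧ ‖z‖ ≤ M := by
    intro z hz
    rw [Metric.mem_ball, dist_eq_norm] at hz
    have him : |z.im - z₀.im| ≤ ‖z - z₀‖ := by simpa using abs_im_le_norm (z - z₀)
    constructor
    · linarith [abs_sub_abs_le_abs_sub z₀.im z.im, abs_sub_comm z.im z₀.im]
    · linarith [norm_le_norm_add_norm_sub' z z₀]
  have hK : ∀ z ∈ Metric.ball z₀ δ, ∀ t : ℝ, ‖(t : ℂ) ^ 2 - z ^ 2‖⁻¹ ≤ K / (t ^ 2 + 1) :=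
    fun z hz t => inv_norm_sq_sub_sq_le hδ (hball z hz).1 (hball z hz).2 t
  have hmaj := integrableOn_rpow_div_sq_add_one h0 h1
  have hderiv := hasDerivAt_integral_of_dominated_loc_of_deriv_le (μ := volume.restrict (Ioi 0))
    (F := fun z (t : ℝ) => 2 * ((t : ℂ) ^ (α : ℂ)) / ((t : ℂ) ^ 2 - z ^ 2))
    (F' := fun z (t : ℝ) => 2 * ((t : ℂ) ^ (α : ℂ)) * (2 * z) / ((t : ℂ) ^ 2 - z ^ 2) ^ 2)
    (bound := fun t => 4 * M * K ^ 2 * (t ^ α / (t ^ 2 + 1)))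
    (Metric.ball_mem_nhds z₀ hδ)
    (.of_forall fun z => (by fun_prop : Measurable _).aestronglyMeasurable)
    ((hmaj.const_mul (2 * K)).mono' (by fun_prop : Measurable _).aestronglyMeasurable ?_)
    (by fun_prop : Measurable _).aestronglyMeasurable ?_ (hmaj.const_mul _) ?_
  · exact hderiv.2.differentiableAt
  all_goals filter_upwards [ae_restrict_mem measurableSet_Ioi] with t (ht : 0 < t)
  · exact norm_lambdaIntegrand_le ht (hK z₀ (Metric.mem_ball_self hδ) t)
  · exact fun z hz => norm_deriv_lambdaIntegrand_le ht (hK z hz t) (hball z hz).2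
  · intro z hz
    have hD := sq_sub_sq_ne_zero_of_im_ne_zero t (abs_pos.mp (hδ.trans_le (hball z hz).1))
    have hden : HasDerivAt (fun w : ℂ => (t : ℂ) ^ 2 - w ^ 2) (-(2 * z)) z := by
      simpa using (hasDerivAt_pow 2 z).const_sub ((t : ℂ) ^ 2)
    exact ((hasDerivAt_const z (2 * (t : ℂ) ^ (α : ℂ))).div hden hD).congr_deriv (by ring)

end Holomorphy

section ClosedForm

lemma lambdaIntegral_I_mul {α : ℝ} (h0 : -1 < α) (h1 : α < 1) {y : ℝ} (hy : y ≠ 0) :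
    lambdaIntegral α (I * y) = ((|y| ^ (α - 1) * (π / Real.cos (π * α / 2)) : ℝ) : ℂ) := by
  have hpt : ∀ t ∈ Ioi (0 : ℝ), 2 * ((t : ℂ) ^ (α : ℂ)) / ((t : ℂ) ^ 2 - (I * y) ^ 2)
      = ((2 * t ^ α / (t ^ 2 + |y| ^ 2) : ℝ) : ℂ) := by
    intro t (ht : 0 < t)
    rw [← ofReal_cpow ht.le, sq_abs, mul_pow, I_sq]
    push_cast
    ring_nf
  rw [lambdaIntegral, setIntegral_congr_fun measurableSet_Ioi hpt,
    ← integral_rpow_div_sq_add_sq h0 h1 (abs_pos.mpr hy)]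
  exact integral_ofReal

lemma I_mul_cpow_mul_exp (α : ℝ) {y : ℝ} (hy : 0 < y) :
    (I * y) ^ ((α : ℂ) - 1) * ((π : ℂ) / Complex.cos (π * α / 2)) *
        Complex.exp ((1 - (α : ℂ)) * π * Complex.I / 2)
      = ((y ^ (α - 1) * (π / Real.cos (π * α / 2)) : ℝ) : ℂ) := by
  rw [cpow_def_of_ne_zero (by simp [hy.ne']), log_mul_ofReal y hy I I_ne_zero, log_I,
    mul_right_comm, ← Complex.exp_add,
    show (Real.log y + π / 2 * I) * ((α : ℂ) - 1) + (1 - (α : ℂ)) * π * I / 2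
      = ((Real.log y * (α - 1) : ℝ) : ℂ) by push_cast; ring,
    ← ofReal_exp, ← Real.rpow_def_of_pos hy]
  push_cast
  ring

theorem lambdaIntegral_eq_of_pos_im {α : ℝ} (h0 : -1 < α) (h1 : α < 1) :
    EqOn (lambdaIntegral α)
      (fun z => z ^ ((α : ℂ) - 1) * ((π : ℂ) / Complex.cos (π * α / 2)) *
        Complex.exp ((1 - (α : ℂ)) * π * Complex.I / 2))
      {z : ℂ | 0 < z.im} := by
  have hU : IsOpen {z : ℂ | 0 < z.im} := isOpen_lt continuous_const continuous_im
  have hI : I ∈ {z : ℂ | 0 < z.im} := by simp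
  refine AnalyticOnNhd.eqOn_of_preconnected_of_frequently_eq (z₀ := I) ?_ ?_
    (convex_halfSpace_im_gt 0).isPreconnected hI ?_
  · refine DifferentiableOn.analyticOnNhd (fun z hz => ?_) hU
    exact (differentiableAt_lambdaIntegral h0 h1 (ne_of_gt hz)).differentiableWithinAt
  · refine DifferentiableOn.analyticOnNhd (fun z hz => ?_) hU
    have hslit : z ∈ slitPlane := mem_slitPlane_iff.mpr (Or.inr (ne_of_gt hz))
    exact ((differentiableAt_id.cpow_const hslit).mul_const _).mul_const _
      |>.differentiableWithinAt
  · have hT : Tendsto (fun y : ℝ => I * y) (𝓝[≠] 1) (𝓝[≠] I) := by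
      refine tendsto_nhdsWithin_of_tendsto_nhds_of_eventually_within _ ?_ ?_
      · have hc : Continuous fun y : ℝ => I * (y : ℂ) := by fun_prop
        simpa using (hc.tendsto 1).mono_left nhdsWithin_le_nhds
      · filter_upwards [self_mem_nhdsWithin] with y (hy : y ≠ 1) hIy
        exact hy (by exact_mod_cast mul_left_cancel₀ I_ne_zero (hIy.trans (mul_one I).symm))
    refine hT.frequently (Eventually.frequently ?_)
    filter_upwards [nhdsWithin_le_nhds (eventually_gt_nhds one_pos)] with y hy
    rw [lambdaIntegral_I_mul h0 h1 hy.ne', abs_of_pos hy, I_mul_cpow_mul_exp α hy]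

lemma lambdaIntegral_conj (α : ℝ) (z : ℂ) :
    lambdaIntegral α (conj z) = conj (lambdaIntegral α z) := by
  rw [lambdaIntegral, lambdaIntegral, ← integral_conj]
  refine setIntegral_congr_fun measurableSet_Ioi (fun t (ht : 0 < t) => ?_)
  rw [← ofReal_cpow ht.le]
  simp [map_div₀, map_ofNat]

theorem lambdaIntegral_eq_of_im_neg {α : ℝ} (h0 : -1 < α) (h1 : α < 1) {z : ℂ} (hz : z.im < 0) :
    lambdaIntegral α z = z ^ ((α : ℂ) - 1) * ((π : ℂ) / Complex.cos (π * α / 2)) *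
      Complex.exp (-((1 - (α : ℂ)) * π * Complex.I / 2)) := by
  have hconj : 0 < (conj z).im := by simpa using hz
  have harg : (conj z).arg ≠ π := fun h => hconj.ne' (arg_eq_pi_iff.mp h).2
  have hpow : z ^ ((α : ℂ) - 1) = conj (conj z ^ ((α : ℂ) - 1)) := by
    simpa using conj_cpow (conj z) ((α : ℂ) - 1) harg
  rw [← conj_conj z, lambdaIntegral_conj, lambdaIntegral_eq_of_pos_im h0 h1 hconj, conj_conj,
    hpow, map_mul, map_mul, ← Complex.exp_conj]
  congr 2
  · rw [map_div₀, ← Complex.cos_conj]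
    simp [map_ofNat]
  · simp only [map_div₀, map_mul, map_sub, map_one, conj_ofReal, conj_I, mul_neg, map_ofNat]
    ring

end ClosedForm

section CharacteristicEquation

lemma existsUnique_rpow_mul_add_sq_eq {p b c : ℝ} (hp : 0 < p) (hb : 0 ≤ b) (hc : 0 < c) :
    ∃! ν : ℝ, 0 < ν ∧ ν ^ p * (b + ν ^ 2) = c := by
  set f : ℝ → ℝ := fun ν => ν ^ p * (b + ν ^ 2)
  have hmono : StrictMonoOn f (Ici 0) := by
    intro x (hx : 0 ≤ x) y _ hxy
    have hy0 : 0 < y := hx.trans_lt hxy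
    calc x ^ p * (b + x ^ 2) ≤ x ^ p * (b + y ^ 2) := by gcongr
      _ < y ^ p * (b + y ^ 2) := by gcongr
  set B := max 1 c
  have hfB : c ≤ f B := by
    have h1B : 1 ≤ B := le_max_left 1 c
    calc c ≤ B := le_max_right 1 c
      _ ≤ 1 * (b + B ^ 2) := by nlinarith
      _ ≤ f B := mul_le_mul_of_nonneg_right (Real.one_le_rpow h1B hp.le) (by positivity)
  have hcont : ContinuousOn f (Icc 0 B) :=
    ((Real.continuous_rpow_const hp.le).mul (by fun_prop)).continuousOn
  obtain ⟨ν, hνmem, hfν⟩ := intermediate_value_Icc (by positivity) hcont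
    ⟨by simp [f, Real.zero_rpow hp.ne', hc.le], hfB⟩
  have hν : 0 < ν := hνmem.1.lt_of_ne fun h => by
    simp [f, ← h, Real.zero_rpow hp.ne', hc.ne] at hfν
  exact ⟨ν, ⟨hν, hfν⟩, fun μ hμ => hmono.injOn (le_of_lt hμ.1) hνmem.1 (hμ.2.trans hfν.symm)⟩

/-- The value of `λ` for which `±iν` are zeros of `Λ`. -/
noncomputable def lamOfNu (α β ν : ℝ) : ℝ :=
  ((1 - α / 2) * (1 - α) / Real.Gamma α) * (π / Real.cos (π * α / 2)) *
    ν ^ (α - 1) / (β ^ 2 + ν ^ 2)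

lemma eq_lamOfNu_iff {α β lam ν : ℝ} (hlam : lam ≠ 0) (hν : 0 < ν) :
    lam = lamOfNu α β ν ↔
      ν ^ (1 - α) * (β ^ 2 + ν ^ 2) = (1 - α / 2) * (1 - α) / Real.Gamma α *
        (π / Real.cos (π * α / 2)) / lam := by
  have hpow : ν ^ (α - 1) = (ν ^ (1 - α))⁻¹ := by
    rw [← Real.rpow_neg hν.le, neg_sub]
  have hD : 0 < β ^ 2 + ν ^ 2 := by positivity
  rw [lamOfNu, hpow, eq_div_iff hlam, eq_div_iff hD.ne']
  field_simp

lemma existsUnique_eq_lamOfNu {α β lam : ℝ} (h0 : 0 < α) (h1 : α < 1) (hlam : 0 < lam) :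
    ∃! ν : ℝ, 0 < ν ∧ lam = lamOfNu α β ν := by
  have hK : 0 < (1 - α / 2) * (1 - α) / Real.Gamma α * (π / Real.cos (π * α / 2)) / lam := by
    have := Real.Gamma_pos_of_pos h0
    have := cos_pi_mul_div_two_pos (by linarith) h1
    have : 0 < (1 - α / 2) * (1 - α) := by nlinarith
    have := Real.pi_pos
    positivity
  obtain ⟨ν, ⟨hν, hνeq⟩, huniq⟩ :=
    existsUnique_rpow_mul_add_sq_eq (by linarith : 0 < 1 - α) (sq_nonneg β) hK
  refine ⟨ν, ⟨hν, (eq_lamOfNu_iff hlam.ne' hν).mpr hνeq⟩, fun μ ⟨hμ, hμeq⟩ => ?_⟩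
  exact huniq μ ⟨hμ, (eq_lamOfNu_iff hlam.ne' hμ).mp hμeq⟩

end CharacteristicEquation

section Zeros

lemma sin_mul_sin_const_mul_pos {c x : ℝ} (hc0 : 0 < c) (hc1 : c ≤ 1) (hx0 : x ≠ 0)
    (hx : |x| < π) : 0 < Real.sin x * Real.sin (c * x) := by
  have hpos : ∀ x : ℝ, 0 < x → x < π → 0 < Real.sin x * Real.sin (c * x) := fun x h0 h1 =>
    mul_pos (Real.sin_pos_of_pos_of_lt_pi h0 h1)
      (Real.sin_pos_of_pos_of_lt_pi (by positivity) (by nlinarith))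
  rcases hx0.lt_or_gt with hneg | hpos'
  · simpa [Real.sin_neg] using hpos (-x) (by linarith) (by linarith [neg_abs_le x])
  · exact hpos x hpos' (by linarith [le_abs_self x])

lemma re_mul_sin_pos {c : ℝ} (hc0 : 0 < c) (hc1 : c ≤ 1) {z : ℂ} (hz : 0 < z.im)
    (hre : z.re ≠ 0) : 0 < z.re * Real.sin (c * (π / 2 - z.arg)) := by
  have harg0 : 0 < z.arg :=
    (arg_nonneg_iff.mpr hz.le).lt_of_ne fun h => hz.ne' (arg_eq_zero_iff.mp h.symm).2
  have harg1 : z.arg < π := arg_lt_pi_iff.mpr (Or.inr hz.ne')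
  rw [← norm_mul_cos_arg, ← Real.sin_pi_div_two_sub] at hre ⊢
  rw [mul_assoc]
  refine mul_pos (norm_pos_iff.mpr fun h => hz.ne' (by simp [h])) ?_
  exact sin_mul_sin_const_mul_pos hc0 hc1 (fun h => hre (by rw [h, Real.sin_zero, mul_zero]))
    (abs_lt.mpr ⟨by linarith, by linarith⟩)

lemma im_cpow_mul_exp (α : ℝ) (z : ℂ) :
    (z ^ ((α : ℂ) - 1) * ((π : ℂ) / Complex.cos (π * α / 2)) *
        Complex.exp ((1 - (α : ℂ)) * π * Complex.I / 2)).im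
      = π / Real.cos (π * α / 2) * ‖z‖ ^ (α - 1) * Real.sin ((1 - α) * (π / 2 - z.arg)) := by
  rw [show (α : ℂ) - 1 = ((α - 1 : ℝ) : ℂ) by push_cast; ring,
    show (π : ℂ) / Complex.cos (π * α / 2) = ((π / Real.cos (π * α / 2) : ℝ) : ℂ) by
      push_cast; ring_nf,
    show (1 - (α : ℂ)) * π * I / 2 = (((1 - α) * π / 2 : ℝ) : ℂ) * I by push_cast; ring,
    Complex.exp_mul_I, ← ofReal_cos, ← ofReal_sin]
  simp only [mul_im, mul_re, add_im, add_re, ofReal_re, ofReal_im, I_re, I_im, cpow_ofReal_re,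
    cpow_ofReal_im]
  rw [show (1 - α) * (π / 2 - z.arg) = z.arg * (α - 1) + (1 - α) * π / 2 by ring, Real.sin_add]
  ring

lemma LambdaFn_conj (α β lam : ℝ) (z : ℂ) :
    LambdaFn α β lam (conj z) = conj (LambdaFn α β lam z) := by
  simp [LambdaFn_eq, lambdaIntegral_conj, map_ofNat]

lemma re_eq_zero_of_LambdaFn_eq_zero {α β lam : ℝ} (h0 : 0 < α) (h1 : α < 1) (hlam : 0 < lam)
    {z : ℂ} (hz : z.im ≠ 0) (hzero : LambdaFn α β lam z = 0) : z.re = 0 := by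
  wlog hz_pos : 0 < z.im generalizing z
  · simpa using this (z := conj z) (by simpa using hz) (by rw [LambdaFn_conj, hzero, map_zero])
      (by simpa using hz.lt_of_le (not_lt.mp hz_pos))
  by_contra hre
  set A := Real.Gamma α * lam / ((1 - α / 2) * (1 - α))
  set C := π / Real.cos (π * α / 2)
  set S := Real.sin ((1 - α) * (π / 2 - z.arg))
  have hA : 0 < A := by
    have := Real.Gamma_pos_of_pos h0
    have : 0 < (1 - α / 2) * (1 - α) := by nlinarith
    positivity
  have hC : 0 < C := div_pos Real.pi_pos (cos_pi_mul_div_two_pos (by linarith) h1)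
  have hN : 0 < ‖z‖ ^ (α - 1) :=
    Real.rpow_pos_of_pos (norm_pos_iff.mpr fun h => hz (by simp [h])) _
  have hS : 0 < z.re * S := re_mul_sin_pos (by linarith) (by linarith) hz_pos hre
  have him := congrArg Complex.im hzero
  rw [LambdaFn_eq, lambdaIntegral_eq_of_pos_im (by linarith) h1 hz_pos, add_im,
    im_cpow_mul_exp, im_ofReal_mul, zero_im,
    show (z ^ 2 - (β : ℂ) ^ 2).im = 2 * z.re * z.im by
      simp only [sq, sub_im, mul_im, ofReal_re, ofReal_im, mul_zero, zero_mul, add_zero, sub_zero]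
      ring] at him
  -- `Im Λ(z)` has the sign of `Re z`: both of its terms do.
  have hsign : 0 < z.re * (A * (2 * z.re * z.im) + C * ‖z‖ ^ (α - 1) * S) := by
    rw [show z.re * (A * (2 * z.re * z.im) + C * ‖z‖ ^ (α - 1) * S)
      = 2 * A * (z.re * z.re) * z.im + C * ‖z‖ ^ (α - 1) * (z.re * S) by ring]
    have := mul_self_pos.mpr hre
    exact add_pos (by positivity) (by positivity)
  rw [him, mul_zero] at hsign
  exact hsign.false

lemma LambdaFn_I_mul_eq_zero_iff {α β lam y : ℝ} (h0 : 0 < α) (h1 : α < 1) (hy : y ≠ 0) :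
    LambdaFn α β lam (I * y) = 0 ↔ lam = lamOfNu α β |y| := by
  have hΓ := Real.Gamma_pos_of_pos h0
  have hc : 0 < (1 - α / 2) * (1 - α) := by nlinarith
  have hcos := cos_pi_mul_div_two_pos (by linarith) h1
  have hD : 0 < β ^ 2 + |y| ^ 2 := by positivity
  rw [LambdaFn_eq, lambdaIntegral_I_mul (by linarith) h1 hy,
    show (I * y) ^ 2 - (β : ℂ) ^ 2 = ((-(β ^ 2 + |y| ^ 2) : ℝ) : ℂ) by
      rw [sq_abs]; push_cast; rw [mul_pow, I_sq]; ring,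
    ← ofReal_mul, ← ofReal_add, ofReal_eq_zero, lamOfNu]
  generalize (1 - α / 2) * (1 - α) = c at hc ⊢
  generalize Real.Gamma α = Γ at hΓ ⊢
  generalize Real.cos (π * α / 2) = κ at hcos ⊢
  generalize β ^ 2 + |y| ^ 2 = D at hD ⊢
  field_simp
  constructor <;> intro h <;> linarith

end Zeros

/-- Closed form for `Λ`, unique solvability of the characteristic equation, and
the zeros of `Λ` off the real axis. -/
theorem LambdaFn_closed_form_and_zeros
    (α β lam : ℝ) (hα : α ∈ Set.Ioo (0:ℝ) 1) (hlam : 0 < lam) :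
    (∀ z : ℂ, 0 < z.im →
      LambdaFn α β lam z =
        ((Real.Gamma α * lam / ((1 - α / 2) * (1 - α)) : ℝ) : ℂ) * (z ^ 2 - (β : ℂ) ^ 2) +
          z ^ ((α : ℂ) - 1) * ((π : ℂ) / Complex.cos (π * α / 2)) *
            Complex.exp ((1 - (α : ℂ)) * π * Complex.I / 2)) ∧
    (∀ z : ℂ, z.im < 0 →
      LambdaFn α β lam z =
        ((Real.Gamma α * lam / ((1 - α / 2) * (1 - α)) : ℝ) : ℂ) * (z ^ 2 - (β : ℂ) ^ 2) +
          z ^ ((α : ℂ) - 1) * ((π : ℂ) / Complex.cos (π * α / 2)) *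
            Complex.exp (-((1 - (α : ℂ)) * π * Complex.I / 2))) ∧
    (∃ ν : ℝ, 0 < ν ∧
      lam = ((1 - α / 2) * (1 - α) / Real.Gamma α) * (π / Real.cos (π * α / 2)) *
        ν ^ (α - 1) / (β ^ 2 + ν ^ 2) ∧
      (∀ ν' : ℝ, 0 < ν' →
        lam = ((1 - α / 2) * (1 - α) / Real.Gamma α) * (π / Real.cos (π * α / 2)) *
          ν' ^ (α - 1) / (β ^ 2 + ν' ^ 2) → ν' = ν) ∧
      (∀ z : ℂ, z.im ≠ 0 →
        (LambdaFn α β lam z = 0 ↔ z = Complex.I * ν ∨ z = -(Complex.I * ν)))) := by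
  obtain ⟨h0, h1⟩ := hα
  obtain ⟨ν, ⟨hν, hlamν⟩, huniq⟩ := existsUnique_eq_lamOfNu (β := β) h0 h1 hlam
  have axis_zero_iff (y : ℝ) (hy : y ≠ 0) : LambdaFn α β lam (I * y) = 0 ↔ |y| = ν :=
    (LambdaFn_I_mul_eq_zero_iff h0 h1 hy).trans
      ⟨fun h => huniq _ ⟨abs_pos.mpr hy, h⟩, fun h => h ▸ hlamν⟩
  refine ⟨fun z hz => by rw [LambdaFn_eq, lambdaIntegral_eq_of_pos_im (by linarith) h1 hz],
    fun z hz => by rw [LambdaFn_eq, lambdaIntegral_eq_of_im_neg (by linarith) h1 hz],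
    ν, hν, hlamν, fun ν' hν' h => huniq ν' ⟨hν', h⟩, fun z hz => ⟨fun hzero => ?_, ?_⟩⟩
  · have hzI : z = I * z.im := by
      apply Complex.ext <;> simp [re_eq_zero_of_LambdaFn_eq_zero h0 h1 hlam hz hzero]
    rw [hzI] at hzero ⊢
    rcases (abs_eq hν.le).mp ((axis_zero_iff _ hz).mp hzero) with h | h
    · exact .inl (by rw [h])
    · exact .inr (by rw [h]; push_cast; ring)
  · rintro (rfl | rfl)
    · exact (axis_zero_iff ν hν.ne').mpr (abs_of_pos hν)
    · rw [show -(I * ν) = I * ((-ν : ℝ) : ℂ) by push_cast; ring]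
      exact (axis_zero_iff _ (neg_ne_zero.mpr hν.ne')).mpr (by rw [abs_neg, abs_of_pos hν])
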